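/- Let q, a, x ∈ ℂ with 0 < |q| < 1, x ≠ 0, and let k, n ∈ ℕ with k ≤ n and 1 - a q^j x ≠ 0 for 0 ≤ j ≤ k - 1. Then the k-th iterate of the q-differential operator applied to the function t ↦ (a t;q)_n, evaluated at x, equals (-a)^k q^{C(k,2)} ((q;q)_n / (q;q)_{n-k}) · ((a x;q)_n / (a x;q)_k). Moreover, if k > n the same k-th iterate evaluated at x equals 0. -/

import Mathlib

/-! `D_q (bt;q)_m = -b (1 - q^m) (bqt;q)_{m-1}`, because `(bt;q)_m` and `(bqt;q)_m` share all
factors except the first of the one and the last of the other. Iterating,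
`D_q^k (at;q)_n = (-a)^k q^{C(k,2)} ∏_{i<k} (1 - q^{n-i}) (aq^k t;q)_{n-k}` at every `t ≠ 0`,
and for `k > n` the product contains the factor `1 - q^0 = 0` (truncated subtraction). -/

/-- The finite q-shifted factorial (a;q)_n = ∏_{j=0}^{n-1} (1 - a q^j). -/
noncomputable def qPoch (q a : ℂ) (n : ℕ) : ℂ :=
  ∏ j ∈ Finset.range n, (1 - a * q ^ j)

/-- The q-differential operator: (D_q f)(x) = (f(x) - f(qx))/x. -/
noncomputable def Dq (q : ℂ) (f : ℂ → ℂ) : ℂ → ℂ :=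
  fun x => (f x - f (q * x)) / x

open Finset

lemma qPoch_add (q b : ℂ) (m n : ℕ) :
    qPoch q b (m + n) = qPoch q b m * qPoch q (b * q ^ m) n := by
  simp only [qPoch, prod_range_add, pow_add, mul_assoc]

lemma qPoch_succ (q b : ℂ) (m : ℕ) : qPoch q b (m + 1) = qPoch q b m * (1 - b * q ^ m) :=
  prod_range_succ _ m

lemma qPoch_succ' (q b : ℂ) (m : ℕ) : qPoch q b (m + 1) = (1 - b) * qPoch q (b * q) m := by
  rw [add_comm, qPoch_add, pow_one]
  simp [qPoch]

lemma qPoch_ne_zero {q b : ℂ} {n : ℕ} (h : ∀ j < n, 1 - b * q ^ j ≠ 0) : qPoch q b n ≠ 0 :=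
  prod_ne_zero_iff.mpr fun j hj => h j (mem_range.mp hj)

lemma qPoch_self_ne_zero {q : ℂ} (hq : ‖q‖ < 1) (n : ℕ) : qPoch q q n ≠ 0 := by
  refine qPoch_ne_zero fun j _ => sub_ne_zero.mpr fun h => ?_
  have : ‖q * q ^ j‖ < 1 := by
    rw [← pow_succ', norm_pow]
    exact pow_lt_one₀ (norm_nonneg q) hq j.succ_ne_zero
  simp [← h] at this

lemma qPoch_self_eq_mul_prod (q : ℂ) {k n : ℕ} (hk : k ≤ n) :
    qPoch q q n = qPoch q q (n - k) * ∏ i ∈ range k, (1 - q ^ (n - i)) := by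
  conv_lhs => rw [← Nat.sub_add_cancel hk, qPoch_add]
  congr 1
  rw [qPoch, ← prod_range_reflect]
  refine prod_congr rfl fun i hi => ?_
  rw [← pow_succ', ← pow_add]
  congr 2
  have := mem_range.mp hi
  omega

lemma prod_range_one_sub_pow_eq_zero (q : ℂ) {k n : ℕ} (hnk : n < k) :
    ∏ i ∈ range k, (1 - q ^ (n - i)) = 0 :=
  prod_eq_zero (mem_range.mpr hnk) (by simp)

lemma Dq_qPoch (q b : ℂ) {x : ℂ} (hx : x ≠ 0) (m : ℕ) :
    Dq q (fun t => qPoch q (b * t) m) x = -b * (1 - q ^ m) * qPoch q (b * q * x) (m - 1) := by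
  cases m with
  | zero => simp [Dq, qPoch]
  | succ m =>
    have hfirst : qPoch q (b * x) (m + 1) = (1 - b * x) * qPoch q (b * q * x) m := by
      rw [qPoch_succ', mul_right_comm]
    have hlast : qPoch q (b * (q * x)) (m + 1) = qPoch q (b * q * x) m * (1 - b * q * x * q ^ m) := by
      rw [← mul_assoc, qPoch_succ]
    rw [Dq, hfirst, hlast, Nat.add_sub_cancel, div_eq_iff hx]
    ring

lemma iterate_Dq_qPoch {q : ℂ} (hq : q ≠ 0) (a : ℂ) (n k : ℕ) {x : ℂ} (hx : x ≠ 0) :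
    (Dq q)^[k] (fun t => qPoch q (a * t) n) x =
      (-a) ^ k * q ^ k.choose 2 * (∏ i ∈ range k, (1 - q ^ (n - i))) *
        qPoch q (a * q ^ k * x) (n - k) := by
  induction k generalizing x with
  | zero => simp
  | succ k ih =>
    have hstep := Dq_qPoch q (a * q ^ k) hx (n - k)
    simp only [Dq] at hstep
    rw [Function.iterate_succ_apply', Dq, ih hx, ih (mul_ne_zero hq hx), ← mul_sub, mul_div_assoc,
      hstep, prod_range_succ, Nat.choose_succ_succ', Nat.choose_one_right, Nat.sub_sub, pow_succ q k,
      ← mul_assoc a (q ^ k) q]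
    ring

theorem stmt19 (q a x : ℂ) (hq0 : 0 < ‖q‖) (hq1 : ‖q‖ < 1)
    (hx : x ≠ 0) (k n : ℕ)
    (h : ∀ j : ℕ, j < k → 1 - a * q ^ j * x ≠ 0) :
    (k ≤ n →
      (Dq q)^[k] (fun t => qPoch q (a * t) n) x =
        (-a) ^ k * q ^ (k.choose 2) * (qPoch q q n / qPoch q q (n - k)) *
          (qPoch q (a * x) n / qPoch q (a * x) k)) ∧
    (n < k → (Dq q)^[k] (fun t => qPoch q (a * t) n) x = 0) := by
  rw [iterate_Dq_qPoch (norm_pos_iff.mp hq0) a n k hx]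
  refine ⟨fun hk => ?_, fun hnk => by simp [prod_range_one_sub_pow_eq_zero q hnk]⟩
  have hax : qPoch q (a * x) k ≠ 0 := qPoch_ne_zero fun j hj => by
    simpa only [mul_right_comm] using h j hj
  have hsplit : qPoch q (a * x) n = qPoch q (a * x) k * qPoch q (a * q ^ k * x) (n - k) := by
    rw [mul_right_comm a (q ^ k) x, ← qPoch_add, Nat.add_sub_cancel' hk]
  rw [qPoch_self_eq_mul_prod q hk, hsplit]
  field_simp [qPoch_self_ne_zero hq1 (n - k)]
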